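/- Ceva's theorem in the hyperbolic plane: if T is a point not on any side line of a hyperbolic triangle ABC such that line AT meets BC in Q, line BT meets CA in R, and line CT meets AB in P, then s(A,P,B)·s(B,Q,C)·s(C,R,A) = 1, where s(X,Z,Y) = ± sinh(d(X,Z))/sinh(d(Z,Y)) with sign determined by betweenness. -/

import Mathlib

open Real Classical

/-- Lorentz bilinear form on ℝ³. -/
def lorentz (P Q : Fin 3 → ℝ) : ℝ := P 0 * Q 0 - P 1 * Q 1 - P 2 * Q 2

/-- Points of the hyperboloid model of H². -/
def onH (P : Fin 3 → ℝ) : Prop := 0 < P 0 ∧ lorentz P P = 1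

/-- Inverse hyperbolic cosine. -/
noncomputable def arcosh (x : ℝ) : ℝ := Real.log (x + Real.sqrt (x ^ 2 - 1))

/-- Hyperbolic distance in the hyperboloid model. -/
noncomputable def dH (P Q : Fin 3 → ℝ) : ℝ := _root_.arcosh (lorentz P Q)

/-- `P` lies between `A` and `B` on their common hyperbolic line (nonnegative
cone combination in the hyperboloid model). -/
def BtwH (A P B : Fin 3 → ℝ) : Prop := ∃ s t : ℝ, 0 ≤ s ∧ 0 ≤ t ∧ P = s • A + t • B

/-- Signed simple ratio of three distinct collinear points of H². -/
noncomputable def sRatio (A P B : Fin 3 → ℝ) : ℝ :=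
  (if BtwH A P B then 1 else -1) * (Real.sinh (dH A P) / Real.sinh (dH P B))

/-! In the hyperboloid model a point `P = s • A + t • B` of the line `AB` satisfies
`sinh d(A,P) = |t| √(⟨A,B⟩² - 1)` and `sinh d(P,B) = |s| √(⟨A,B⟩² - 1)`, and `P` lies between
`A` and `B` exactly when `s, t ≥ 0`; hence `s(A,P,B) = t / s`. Writing
`T = t₁ • A + t₂ • B + t₃ • C`, the feet of the cevians through `T` are multiples of
`t₁ • A + t₂ • B`, `t₂ • B + t₃ • C` and `t₃ • C + t₁ • A`, so the three ratios are
`t₂ / t₁`, `t₃ / t₂` and `t₁ / t₃`. -/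

section LinearAlgebra

variable {K V : Type*} [Field K] [AddCommGroup V] [Module K V]

lemma LinearIndependent.eq_zero_of_smul_add_smul_add_smul {A B C : V}
    (h : LinearIndependent K ![A, B, C]) {a b c : K} (habc : a • A + b • B + c • C = 0) :
    a = 0 ∧ b = 0 ∧ c = 0 := by
  have := Fintype.linearIndependent_iff.mp h ![a, b, c] (by simpa [Fin.sum_univ_three] using habc)
  exact ⟨this 0, this 1, this 2⟩

lemma LinearIndependent.rotate_three {A B C : V} (h : LinearIndependent K ![A, B, C]) :
    LinearIndependent K ![B, C, A] := by
  convert h.comp _ (finRotate 3).injective using 1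
  ext i
  fin_cases i <;> rfl

lemma LinearIndependent.tail_three {A B C : V} (h : LinearIndependent K ![A, B, C]) :
    LinearIndependent K ![B, C] :=
  (linearIndependent_finCons.mp h).1

lemma LinearIndependent.exists_eq_smul_add_smul_add_smul {A B C : V}
    (h : LinearIndependent K ![A, B, C]) (hV : Module.finrank K V = 3) (T : V) :
    ∃ a b c : K, T = a • A + b • B + c • C := by
  have hspan := h.span_eq_top_of_card_eq_finrank (by simp [hV])
  obtain ⟨f, hf⟩ := Submodule.mem_span_range_iff_exists_fun K |>.mp (hspan ▸ Submodule.mem_top)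
  exact ⟨f 0, f 1, f 2, by simpa [Fin.sum_univ_three] using hf.symm⟩

lemma eq_smul_of_mem_span_pair_inter {A B C T Q : V} (h : LinearIndependent K ![A, B, C])
    {a b c : K} (hT : T = a • A + b • B + c • C)
    (hQAT : Q ∈ Submodule.span K {A, T}) (hQBC : Q ∈ Submodule.span K {B, C}) :
    ∃ y : K, Q = y • (b • B + c • C) := by
  obtain ⟨x, y, hxy⟩ := Submodule.mem_span_pair.mp hQAT
  obtain ⟨u, v, huv⟩ := Submodule.mem_span_pair.mp hQBC
  have hzero : (x + y * a) • A + (y * b - u) • B + (y * c - v) • C = 0 := by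
    rw [← sub_eq_zero.mpr (hxy.trans huv.symm), hT]
    module
  obtain ⟨-, hu, hv⟩ := h.eq_zero_of_smul_add_smul_add_smul hzero
  refine ⟨y, ?_⟩
  rw [← huv, ← sub_eq_zero.mp hu, ← sub_eq_zero.mp hv]
  module

end LinearAlgebra

lemma lorentz_comm (X Y : Fin 3 → ℝ) : lorentz X Y = lorentz Y X := by
  unfold lorentz; ring

lemma lorentz_smul_add_smul_right (X A B : Fin 3 → ℝ) (s t : ℝ) :
    lorentz X (s • A + t • B) = s * lorentz X A + t * lorentz X B := by
  simp only [lorentz, Pi.add_apply, Pi.smul_apply, smul_eq_mul]; ring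

lemma lorentz_smul_add_smul_self (A B : Fin 3 → ℝ) (s t : ℝ) :
    lorentz (s • A + t • B) (s • A + t • B)
      = s ^ 2 * lorentz A A + 2 * s * t * lorentz A B + t ^ 2 * lorentz B B := by
  simp only [lorentz, Pi.add_apply, Pi.smul_apply, smul_eq_mul]; ring

namespace onH

variable {A B : Fin 3 → ℝ}

lemma ne_zero (hA : onH A) : A ≠ 0 := by
  rintro rfl
  simpa using hA.1

lemma one_le_lorentz (hA : onH A) (hB : onH B) : 1 ≤ lorentz A B := by
  obtain ⟨hA0, hAA⟩ := hA
  obtain ⟨hB0, hBB⟩ := hB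
  unfold lorentz at *
  nlinarith [sq_nonneg (A 1 * B 2 - A 2 * B 1), sq_nonneg (A 1 - B 1), sq_nonneg (A 2 - B 2),
    mul_pos hA0 hB0, sq_nonneg (A 0 * B 0 - 1 - A 1 * B 1 - A 2 * B 2),
    sq_nonneg (A 0 * B 0 + 1 + A 1 * B 1 + A 2 * B 2)]

lemma eq_of_lorentz_eq_one (hA : onH A) (hB : onH B) (h : lorentz A B = 1) : A = B := by
  obtain ⟨hA0, hAA⟩ := hA
  obtain ⟨hB0, hBB⟩ := hB
  unfold lorentz at *
  have h1 : A 1 = B 1 := by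
    nlinarith [sq_nonneg (A 1 * B 2 - A 2 * B 1), sq_nonneg (A 1 - B 1), sq_nonneg (A 2 - B 2),
      mul_pos hA0 hB0]
  have h2 : A 2 = B 2 := by
    nlinarith [sq_nonneg (A 1 * B 2 - A 2 * B 1), sq_nonneg (A 1 - B 1), sq_nonneg (A 2 - B 2),
      mul_pos hA0 hB0]
  have h0 : A 0 = B 0 := by nlinarith
  ext i
  fin_cases i <;> assumption

lemma sinh_dH (hA : onH A) (hB : onH B) :
    sinh (dH A B) = √(lorentz A B ^ 2 - 1) :=
  Real.sinh_arcosh (hA.one_le_lorentz hB)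

end onH

section Segment

variable {A B P : Fin 3 → ℝ} {s t : ℝ}

lemma btwH_iff_of_eq_smul_add_smul (hAB : LinearIndependent ℝ ![A, B])
    (hP : P = s • A + t • B) : BtwH A P B ↔ 0 ≤ s ∧ 0 ≤ t := by
  constructor
  · rintro ⟨s', t', hs', ht', hP'⟩
    obtain ⟨rfl, rfl⟩ := hAB.eq_of_pair (hP.symm.trans hP')
    exact ⟨hs', ht'⟩
  · rintro ⟨hs, ht⟩
    exact ⟨s, t, hs, ht, hP⟩

/-- `⟨A, P⟩ = s + t ⟨A, B⟩` and `⟨P, P⟩ = 1` give `⟨A, P⟩² - 1 = t² (⟨A, B⟩² - 1)`. -/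
lemma sinh_dH_left_eq_abs_mul (hA : onH A) (hB : onH B) (hP : onH P)
    (hPst : P = s • A + t • B) : sinh (dH A P) = |t| * √(lorentz A B ^ 2 - 1) := by
  have hAP : lorentz A P = s + t * lorentz A B := by
    rw [hPst, lorentz_smul_add_smul_right, hA.2]; ring
  have hPP := hP.2
  rw [hPst, lorentz_smul_add_smul_self, hA.2, hB.2] at hPP
  rw [hA.sinh_dH hP, hAP, ← Real.sqrt_sq_eq_abs, ← Real.sqrt_mul (sq_nonneg t)]
  congr 1
  linear_combination hPP

lemma sinh_dH_right_eq_abs_mul (hA : onH A) (hB : onH B) (hP : onH P)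
    (hPst : P = s • A + t • B) : sinh (dH P B) = |s| * √(lorentz A B ^ 2 - 1) := by
  rw [dH, lorentz_comm, lorentz_comm A]
  exact sinh_dH_left_eq_abs_mul hB hA hP (hPst.trans (add_comm _ _))

lemma sRatio_eq_div (hA : onH A) (hB : onH B) (hP : onH P) (hAB : LinearIndependent ℝ ![A, B])
    (hPst : P = s • A + t • B) (hs : s ≠ 0) (ht : t ≠ 0) : sRatio A P B = t / s := by
  have hc : 1 < lorentz A B := (hA.one_le_lorentz hB).lt_of_ne fun h ↦
    hAB.injective.ne (by decide : (0 : Fin 2) ≠ 1) (hA.eq_of_lorentz_eq_one hB h.symm)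
  have hAP : 1 ≤ s * 1 + t * lorentz A B := by
    simpa only [hPst, lorentz_smul_add_smul_right, hA.2] using hA.one_le_lorentz hP
  have hsqrt : 0 < √(lorentz A B ^ 2 - 1) := Real.sqrt_pos.mpr (by nlinarith)
  rw [sRatio, btwH_iff_of_eq_smul_add_smul hAB hPst, sinh_dH_left_eq_abs_mul hA hB hP hPst,
    sinh_dH_right_eq_abs_mul hA hB hP hPst, mul_div_mul_right _ _ hsqrt.ne']
  rcases hs.lt_or_gt with hs | hs <;> rcases ht.lt_or_gt with ht | ht
  · nlinarith
  · simp [hs.not_ge, abs_of_neg hs, abs_of_pos ht, div_neg]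
  · simp [ht.not_ge, abs_of_pos hs, abs_of_neg ht, neg_div]
  · simp [hs.le, ht.le, abs_of_pos hs, abs_of_pos ht]

end Segment

lemma sRatio_cevian_foot {A B C T Q : Fin 3 → ℝ} {a b c : ℝ} (hB : onH B) (hC : onH C)
    (hQ : onH Q) (hABC : LinearIndependent ℝ ![A, B, C]) (hT : T = a • A + b • B + c • C)
    (hb : b ≠ 0) (hc : c ≠ 0) (hQAT : Q ∈ Submodule.span ℝ {A, T})
    (hQBC : Q ∈ Submodule.span ℝ {B, C}) : sRatio B Q C = c / b := by
  obtain ⟨y, rfl⟩ := eq_smul_of_mem_span_pair_inter hABC hT hQAT hQBC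
  have hy : y ≠ 0 := by
    rintro rfl
    exact hQ.ne_zero (zero_smul _ _)
  rw [sRatio_eq_div hB hC hQ hABC.tail_three (smul_add _ _ _ |>.trans (by simp only [smul_smul]))
    (mul_ne_zero hy hb) (mul_ne_zero hy hc), mul_div_mul_left _ _ hy]

theorem hyperbolic_ceva_general (A B C P Q R T : Fin 3 → ℝ)
    (hA : onH A) (hB : onH B) (hC : onH C)
    (hP : onH P) (hQ : onH Q) (hR : onH R)
    (hABC : LinearIndependent ℝ ![A, B, C])
    (hTAB : T ∉ Submodule.span ℝ ({A, B} : Set (Fin 3 → ℝ)))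
    (hTBC : T ∉ Submodule.span ℝ ({B, C} : Set (Fin 3 → ℝ)))
    (hTCA : T ∉ Submodule.span ℝ ({C, A} : Set (Fin 3 → ℝ)))
    (hQmem : Q ∈ Submodule.span ℝ ({A, T} : Set (Fin 3 → ℝ)) ∧
             Q ∈ Submodule.span ℝ ({B, C} : Set (Fin 3 → ℝ)))
    (hRmem : R ∈ Submodule.span ℝ ({B, T} : Set (Fin 3 → ℝ)) ∧
             R ∈ Submodule.span ℝ ({C, A} : Set (Fin 3 → ℝ)))
    (hPmem : P ∈ Submodule.span ℝ ({C, T} : Set (Fin 3 → ℝ)) ∧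
             P ∈ Submodule.span ℝ ({A, B} : Set (Fin 3 → ℝ))) :
    sRatio A P B * sRatio B Q C * sRatio C R A = 1 := by
  obtain ⟨t₁, t₂, t₃, hT⟩ := hABC.exists_eq_smul_add_smul_add_smul (Module.finrank_fin_fun ℝ) T
  have ht₁ : t₁ ≠ 0 := by
    rintro rfl
    exact hTBC (Submodule.mem_span_pair.mpr ⟨t₂, t₃, by rw [hT]; module⟩)
  have ht₂ : t₂ ≠ 0 := by
    rintro rfl
    exact hTCA (Submodule.mem_span_pair.mpr ⟨t₃, t₁, by rw [hT]; module⟩)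
  have ht₃ : t₃ ≠ 0 := by
    rintro rfl
    exact hTAB (Submodule.mem_span_pair.mpr ⟨t₁, t₂, by rw [hT]; module⟩)
  have hBCA := hABC.rotate_three
  rw [sRatio_cevian_foot hA hB hP hBCA.rotate_three (by rw [hT]; module) ht₁ ht₂ hPmem.1 hPmem.2,
    sRatio_cevian_foot hB hC hQ hABC hT ht₂ ht₃ hQmem.1 hQmem.2,
    sRatio_cevian_foot hC hA hR hBCA (by rw [hT]; module) ht₃ ht₁ hRmem.1 hRmem.2]
  field_simp

/-- Ceva's theorem in the hyperbolic plane: if `T` is a point not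
on any side line of a nondegenerate triangle `A B C` such that line `AT` meets
`BC` in `Q`, line `BT` meets `CA` in `R`, and line `CT` meets `AB` in `P`, then
s(A,P,B)·s(B,Q,C)·s(C,R,A) = 1. -/
theorem hyperbolic_ceva (A B C P Q R T : Fin 3 → ℝ)
    (hA : onH A) (hB : onH B) (hC : onH C)
    (hP : onH P) (hQ : onH Q) (hR : onH R) (hT : onH T)
    (hABC : LinearIndependent ℝ ![A, B, C])
    (hTAB : T ∉ Submodule.span ℝ ({A, B} : Set (Fin 3 → ℝ)))
    (hTBC : T ∉ Submodule.span ℝ ({B, C} : Set (Fin 3 → ℝ)))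
    (hTCA : T ∉ Submodule.span ℝ ({C, A} : Set (Fin 3 → ℝ)))
    (hQmem : Q ∈ Submodule.span ℝ ({A, T} : Set (Fin 3 → ℝ)) ∧
             Q ∈ Submodule.span ℝ ({B, C} : Set (Fin 3 → ℝ)))
    (hRmem : R ∈ Submodule.span ℝ ({B, T} : Set (Fin 3 → ℝ)) ∧
             R ∈ Submodule.span ℝ ({C, A} : Set (Fin 3 → ℝ)))
    (hPmem : P ∈ Submodule.span ℝ ({C, T} : Set (Fin 3 → ℝ)) ∧
             P ∈ Submodule.span ℝ ({A, B} : Set (Fin 3 → ℝ))) :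
    sRatio A P B * sRatio B Q C * sRatio C R A = 1 :=
  hyperbolic_ceva_general A B C P Q R T hA hB hC hP hQ hR hABC hTAB hTBC hTCA hQmem hRmem hPmem
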